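/- Let s ∈ (0,1) and let K(x,y) be a kernel with |K(x,y)| ≤ Λ|y|^{-n-2s} satisfying ∫_{B_{2r} \ B_r} |K(x,y) - K(x',y)| dy ≤ ω(|x-x'|) r^{-2s} for all r > 0, with ω a modulus of continuity. Let u be bounded on ℝ^n, C² on B_r(x₀), and x ∈ B_{r/2}(x₀). Then for any x' ∈ ℝ^n, |∫ (2u(x) - u(x+y) - u(x-y))(K(x',y) - K(x,y)) dy| ≤ C (‖u‖_{C²(B_{3r/4}(x₀))} + ‖u‖_{L∞(ℝ^n)}) ω(|x - x'|), with C depending only on n, s, r. -/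

import Mathlib

/-!
Write `φ(y) = 2u(x) - u(x+y) - u(x-y)` and `g(y) = K(x',y) - K(x,y)`, and split `ℝⁿ \ {0}` into the
dyadic annuli `R 2ᵏ ≤ |y| < R 2ᵏ⁺¹`, `k ∈ ℤ`, with `R = r/4`; the origin is harmless as `φ(0) = 0`.
On an annulus with `k < 0` the mean value theorem, applied to `u` and to `Du`, gives
`|φ(y)| ≲ ‖D²u‖ (R 2ᵏ)²`; on one with `k ≥ 0` simply `|φ(y)| ≤ 4‖u‖_∞`. Over either kind of annulus
`∫ |g| ≤ ω(|x-x'|) (R 2ᵏ)^{-2s}`, so the contributions are geometric in `|k|`, with ratios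
`2^{2s-2}` and `2^{-2s}`, both `< 1` because `0 < s < 1`.
-/

open MeasureTheory

abbrev Euc (n : ℕ) : Type := EuclideanSpace ℝ (Fin n)

open Metric Set

section SecondDifference

variable {E F : Type*} [NormedAddCommGroup E] [NormedSpace ℝ E] [NormedAddCommGroup F]
  [NormedSpace ℝ F] {u : E → F} {U V : Set E} {A : ℝ}

theorem norm_fderiv_sub_fderiv_le (hU : IsOpen U) (hu : ContDiffOn ℝ 2 u U) (hVU : V ⊆ U)
    (hV : Convex ℝ V) (hA : ∀ z ∈ V, ‖iteratedFDeriv ℝ 2 u z‖ ≤ A) {a b : E} (ha : a ∈ V)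
    (hb : b ∈ V) : ‖fderiv ℝ u b - fderiv ℝ u a‖ ≤ A * ‖b - a‖ := by
  refine hV.norm_image_sub_le_of_norm_hasFDerivWithin_le (𝕜 := ℝ)
    (f' := fderiv ℝ (fderiv ℝ u)) (fun z hz => ?_) (fun z hz => ?_) ha hb
  · have hz : ContDiffAt ℝ 2 u z := hu.contDiffAt (hU.mem_nhds (hVU hz))
    exact ((hz.fderiv_right (m := 1) le_rfl).differentiableAt one_ne_zero).hasFDerivAt
      |>.hasFDerivWithinAt
  · rw [← norm_iteratedFDeriv_one, norm_iteratedFDeriv_fderiv]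
    exact hA z hz

theorem norm_add_sub_two_nsmul_le (hU : IsOpen U) (hu : ContDiffOn ℝ 2 u U) (hVU : V ⊆ U)
    (hV : Convex ℝ V) (hA : ∀ z ∈ V, ‖iteratedFDeriv ℝ 2 u z‖ ≤ A) {x y : E}
    (hxy : x + y ∈ V) (hxy' : x - y ∈ V) :
    ‖u (x + y) + u (x - y) - 2 • u x‖ ≤ 2 * A * ‖y‖ ^ 2 := by
  have hx : x ∈ V := by
    convert hV hxy hxy' (by norm_num : (0 : ℝ) ≤ 1 / 2) (by norm_num : (0 : ℝ) ≤ 1 / 2)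
      (by norm_num) using 1
    module
  have hmem : ∀ t ∈ Icc (0 : ℝ) 1, x + t • y ∈ V ∧ x - t • y ∈ V := fun t ht =>
    ⟨by simpa using hV.add_smul_sub_mem hx hxy ht,
      by simpa [sub_eq_add_neg] using hV.add_smul_sub_mem hx hxy' ht⟩
  have hd : ∀ z ∈ V, HasFDerivAt u (fderiv ℝ u z) z := fun z hz =>
    ((hu.contDiffAt (hU.mem_nhds (hVU hz))).differentiableAt two_ne_zero).hasFDerivAt
  have hderiv : ∀ t ∈ Icc (0 : ℝ) 1,
      HasDerivWithinAt (fun t : ℝ => u (x + t • y) + u (x - t • y))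
        (fderiv ℝ u (x + t • y) y - fderiv ℝ u (x - t • y) y) (Icc 0 1) t := by
    intro t ht
    have hplus := (hd _ (hmem t ht).1).comp_hasDerivAt t
      (((hasDerivAt_id t).smul_const y).const_add x)
    have hminus := (hd _ (hmem t ht).2).comp_hasDerivAt t
      (((hasDerivAt_id t).smul_const y).const_sub x)
    convert (hplus.add hminus).hasDerivWithinAt using 1
    · rfl
    · simp [sub_eq_add_neg]
  have hbound : ∀ t ∈ Icc (0 : ℝ) 1,
      ‖fderiv ℝ u (x + t • y) y - fderiv ℝ u (x - t • y) y‖ ≤ 2 * A * ‖y‖ ^ 2 := by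
    intro t ht
    have hA0 : 0 ≤ A := (norm_nonneg _).trans (hA x hx)
    have hlip := norm_fderiv_sub_fderiv_le hU hu hVU hV hA (hmem t ht).2 (hmem t ht).1
    have hdist : ‖(x + t • y) - (x - t • y)‖ ≤ 2 * ‖y‖ := by
      rw [show (x + t • y) - (x - t • y) = (2 * t) • y by module, norm_smul, Real.norm_eq_abs,
        abs_of_nonneg (by linarith [ht.1])]
      nlinarith [ht.2, norm_nonneg y]
    calc ‖fderiv ℝ u (x + t • y) y - fderiv ℝ u (x - t • y) y‖
        = ‖(fderiv ℝ u (x + t • y) - fderiv ℝ u (x - t • y)) y‖ := rfl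
      _ ≤ ‖fderiv ℝ u (x + t • y) - fderiv ℝ u (x - t • y)‖ * ‖y‖ :=
          ContinuousLinearMap.le_opNorm _ _
      _ ≤ A * (2 * ‖y‖) * ‖y‖ := by gcongr; exact hlip.trans (by gcongr)
      _ = 2 * A * ‖y‖ ^ 2 := by ring
  have := (convex_Icc (0 : ℝ) 1).norm_image_sub_le_of_norm_hasDerivWithin_le hderiv hbound
    (left_mem_Icc.2 zero_le_one) (right_mem_Icc.2 zero_le_one)
  simpa [two_nsmul, sub_add_eq_sub_sub] using this

end SecondDifference

theorem abs_two_mul_sub_sub_le_of_mem_ball {E : Type*} [NormedAddCommGroup E]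
    [NormedSpace ℝ E] {u : E → ℝ} {x₀ x y : E} {r A : ℝ} (hu : ContDiffOn ℝ 2 u (ball x₀ r))
    (hA : ∀ z ∈ ball x₀ (3 * r / 4), ‖iteratedFDerivWithin ℝ 2 u (ball x₀ r) z‖ ≤ A)
    (hx : x ∈ ball x₀ (r / 2)) (hy : ‖y‖ ≤ r / 4) :
    |2 * u x - u (x + y) - u (x - y)| ≤ 2 * A * ‖y‖ ^ 2 := by
  have hr : 0 < r := by linarith [mem_ball.1 hx, dist_nonneg (x := x) (y := x₀)]
  have hVU : ball x₀ (3 * r / 4) ⊆ ball x₀ r := ball_subset_ball (by linarith)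
  have hA' : ∀ z ∈ ball x₀ (3 * r / 4), ‖iteratedFDeriv ℝ 2 u z‖ ≤ A := fun z hz => by
    simpa [iteratedFDerivWithin_of_isOpen 2 isOpen_ball (hVU hz)] using hA z hz
  have hmem : ∀ v : E, ‖v‖ ≤ r / 4 → x + v ∈ ball x₀ (3 * r / 4) := fun v hv => by
    rw [mem_ball] at hx ⊢
    calc dist (x + v) x₀ ≤ dist x x₀ + ‖v‖ := by
          simpa [dist_eq_norm, add_sub_right_comm] using norm_add_le (x - x₀) v
      _ < 3 * r / 4 := by linarith
  have := norm_add_sub_two_nsmul_le isOpen_ball hu hVU (convex_ball _ _) hA' (hmem y hy)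
    (by simpa [sub_eq_add_neg] using hmem (-y) (by simpa using hy))
  rw [Real.norm_eq_abs, nsmul_eq_mul, Nat.cast_two] at this
  rwa [← abs_neg, show -(2 * u x - u (x + y) - u (x - y)) = u (x + y) + u (x - y) - 2 * u x by
    ring]

theorem tsum_int_le_of_le_geometric {F : ℤ → ℝ} {a b p q : ℝ} (hF : Summable F)
    (hp0 : 0 ≤ p) (hp1 : p < 1) (hq0 : 0 ≤ q) (hq1 : q < 1) (hnat : ∀ n : ℕ, F n ≤ a * p ^ n)
    (hneg : ∀ n : ℕ, F (-(n + 1)) ≤ b * q ^ n) :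
    ∑' k, F k ≤ a / (1 - p) + b / (1 - q) := by
  have hnat' := hF.comp_injective Nat.cast_injective
  have hneg' := hF.comp_injective (i := fun n : ℕ => -((n : ℤ) + 1))
    (fun m n h => by simpa using h)
  rw [tsum_of_nat_of_neg_add_one hnat' hneg', div_eq_mul_inv, div_eq_mul_inv]
  exact add_le_add
    (hasSum_le hnat hnat'.hasSum ((hasSum_geometric_of_lt_one hp0 hp1).mul_left a))
    (hasSum_le hneg hneg'.hasSum ((hasSum_geometric_of_lt_one hq0 hq1).mul_left b))

theorem mul_two_zpow_rpow {R : ℝ} (hR : 0 ≤ R) (t : ℝ) (k : ℤ) :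
    (R * 2 ^ k) ^ t = R ^ t * ((2 : ℝ) ^ t) ^ k := by
  rw [Real.mul_rpow hR (by positivity)]
  congr 1
  rw [← Real.rpow_intCast, ← Real.rpow_mul zero_le_two, mul_comm, Real.rpow_mul zero_le_two,
    Real.rpow_intCast]

theorem mul_two_zpow_neg_succ_rpow {R : ℝ} (hR : 0 ≤ R) (t : ℝ) (n : ℕ) :
    (R * 2 ^ (-((n : ℤ) + 1))) ^ t = R ^ t * ((2 : ℝ) ^ (-t)) ^ (n + 1) := by
  rw [mul_two_zpow_rpow hR, zpow_neg, ← Nat.cast_succ, zpow_natCast, ← inv_pow,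
    ← Real.rpow_neg zero_le_two]

theorem two_mul_mul_two_zpow_neg_succ_le {R : ℝ} (hR : 0 ≤ R) (n : ℕ) :
    2 * (R * 2 ^ (-((n : ℤ) + 1))) ≤ R := by
  rw [mul_left_comm, ← zpow_one_add₀ two_ne_zero]
  exact mul_le_of_le_one_right hR (zpow_le_one_of_nonpos₀ one_le_two (by omega))

theorem setIntegral_abs_mul_le {X : Type*} [MeasurableSpace X] {μ : Measure X} {φ g : X → ℝ}
    {S : Set X} {M : ℝ} (hS : MeasurableSet S) (hφg : IntegrableOn (fun y => φ y * g y) S μ)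
    (hg : IntegrableOn g S μ) (hφ : ∀ y ∈ S, |φ y| ≤ M) :
    ∫ y in S, |φ y * g y| ∂μ ≤ M * ∫ y in S, |g y| ∂μ := by
  rw [← integral_const_mul]
  refine setIntegral_mono_on hφg.abs (hg.abs.const_mul M) hS fun y hy => ?_
  rw [abs_mul]
  exact mul_le_mul_of_nonneg_right (hφ y hy) (abs_nonneg _)

section DyadicAnnulus

variable {E : Type*} [NormedAddCommGroup E]

def dyadicAnnulus (ρ : ℝ) : Set E := ball 0 (2 * ρ) \ ball 0 ρ

theorem mem_dyadicAnnulus {ρ : ℝ} {y : E} : y ∈ dyadicAnnulus ρ ↔ ρ ≤ ‖y‖ ∧ ‖y‖ < 2 * ρ := by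
  simp [dyadicAnnulus, and_comm]

theorem iUnion_dyadicAnnulus {R : ℝ} (hR : 0 < R) :
    ⋃ k : ℤ, dyadicAnnulus (R * 2 ^ k) = ({0}ᶜ : Set E) := by
  ext y
  simp only [mem_iUnion, mem_dyadicAnnulus, mem_compl_singleton_iff]
  constructor
  · rintro ⟨k, hk, -⟩
    exact norm_pos_iff.1 ((by positivity : (0 : ℝ) < R * 2 ^ k).trans_le hk)
  · intro hy
    obtain ⟨k, hlo, hhi⟩ := exists_mem_Ico_zpow (div_pos (norm_pos_iff.2 hy) hR) one_lt_two
    rw [le_div_iff₀ hR] at hlo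
    rw [div_lt_iff₀ hR, zpow_add_one₀ two_ne_zero] at hhi
    exact ⟨k, by linarith, by linarith⟩

theorem pairwise_disjoint_dyadicAnnulus {R : ℝ} (hR : 0 < R) :
    Pairwise (Function.onFun Disjoint fun k : ℤ => (dyadicAnnulus (R * 2 ^ k) : Set E)) := by
  intro j k hjk
  wlog h : j < k generalizing j k
  · exact (this hjk.symm (lt_of_le_of_ne (not_lt.1 h) hjk.symm)).symm
  refine Set.disjoint_left.2 fun y hj hk => ?_
  rw [mem_dyadicAnnulus] at hj hk
  have : R * 2 ^ (j + 1) ≤ R * 2 ^ k := by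
    gcongr
    exacts [one_le_two, h]
  rw [zpow_add_one₀ two_ne_zero] at this
  linarith [hj.2, hk.1]

variable [MeasurableSpace E] [BorelSpace E]

theorem measurableSet_dyadicAnnulus (ρ : ℝ) : MeasurableSet (dyadicAnnulus ρ : Set E) :=
  measurableSet_ball.diff measurableSet_ball

theorem hasSum_setIntegral_dyadicAnnulus {F : Type*} [NormedAddCommGroup F] [NormedSpace ℝ F]
    {μ : Measure E} {f : E → F} {R : ℝ} (hR : 0 < R) (hf : Integrable f μ) (hf0 : f 0 = 0) :
    HasSum (fun k : ℤ => ∫ y in dyadicAnnulus (R * 2 ^ k), f y ∂μ) (∫ y, f y ∂μ) := by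
  have := hasSum_integral_iUnion (fun k => measurableSet_dyadicAnnulus _)
    (pairwise_disjoint_dyadicAnnulus hR) hf.integrableOn
  rwa [iUnion_dyadicAnnulus hR, setIntegral_eq_integral_of_forall_compl_eq_zero] at this
  simpa using hf0

theorem integrableOn_dyadicAnnulus [ProperSpace E] {μ : Measure E} [IsFiniteMeasureOnCompacts μ]
    {g : E → ℝ} {c p ρ : ℝ} (hgm : AEStronglyMeasurable g μ) (hp : 0 ≤ p) (hρ : 0 < ρ)
    (hg : ∀ y ≠ 0, |g y| ≤ c * ‖y‖ ^ (-p)) : IntegrableOn g (dyadicAnnulus ρ) μ := by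
  refine Measure.integrableOn_of_bounded (M := |c| * ρ ^ (-p))
    ((measure_mono sdiff_subset).trans_lt measure_ball_lt_top).ne hgm ?_
  filter_upwards [ae_restrict_mem (measurableSet_dyadicAnnulus ρ)] with y hy
  have hρy := (mem_dyadicAnnulus.1 hy).1
  calc ‖g y‖ = |g y| := Real.norm_eq_abs _
    _ ≤ c * ‖y‖ ^ (-p) := hg y (norm_pos_iff.1 (hρ.trans_le hρy))
    _ ≤ |c| * ‖y‖ ^ (-p) := mul_le_mul_of_nonneg_right (le_abs_self c) (by positivity)
    _ ≤ |c| * ρ ^ (-p) := mul_le_mul_of_nonneg_left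
      (Real.rpow_le_rpow_of_nonpos hρ hρy (neg_nonpos.2 hp)) (abs_nonneg c)

end DyadicAnnulus

section DyadicEstimate

variable {E : Type*} [NormedAddCommGroup E] [MeasurableSpace E] [BorelSpace E] {μ : Measure E}
  {φ g : E → ℝ} {R s M W : ℝ}

theorem integral_abs_mul_le_of_dyadicAnnulus (hR : 0 < R) (hs : 0 < s) (hs1 : s < 1)
    (hφg : Integrable (fun y => φ y * g y) μ) (hφ0 : φ 0 = 0) (hM : 0 ≤ M)
    (hφ : ∀ y, |φ y| ≤ M) (hφR : ∀ y, ‖y‖ ≤ R → |φ y| ≤ M * ‖y‖ ^ 2)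
    (hg : ∀ ρ > 0, IntegrableOn g (dyadicAnnulus ρ) μ)
    (hgW : ∀ ρ > 0, ∫ y in dyadicAnnulus ρ, |g y| ∂μ ≤ W * ρ ^ (-(2 * s))) :
    ∫ y, |φ y * g y| ∂μ ≤ M * W * R ^ (-(2 * s)) / (1 - 2 ^ (-(2 * s)))
      + 4 * M * W * R ^ (2 - 2 * s) * 2 ^ (-(2 - 2 * s)) / (1 - 2 ^ (-(2 - 2 * s))) := by
  set q : ℝ := 2 ^ (-(2 - 2 * s))
  set F : ℤ → ℝ := fun k => ∫ y in dyadicAnnulus (R * 2 ^ k), |φ y * g y| ∂μ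
  have hsum : HasSum F (∫ y, |φ y * g y| ∂μ) :=
    hasSum_setIntegral_dyadicAnnulus hR hφg.abs (by simp [hφ0])
  have hF : ∀ k {L : ℝ}, 0 ≤ L → (∀ y ∈ dyadicAnnulus (R * 2 ^ k), |φ y| ≤ L) →
      F k ≤ L * (W * (R * 2 ^ k) ^ (-(2 * s))) := fun k L hL0 hL =>
    (setIntegral_abs_mul_le (measurableSet_dyadicAnnulus _) hφg.integrableOn
      (hg _ (by positivity)) hL).trans
      (mul_le_mul_of_nonneg_left (hgW _ (by positivity)) hL0)
  have hnat : ∀ n : ℕ, F n ≤ M * W * R ^ (-(2 * s)) * (2 ^ (-(2 * s))) ^ n := fun n => by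
    refine (hF n hM fun y _ => hφ y).trans_eq ?_
    rw [mul_two_zpow_rpow hR.le, zpow_natCast]
    ring
  have hneg : ∀ n : ℕ, F (-(n + 1)) ≤ 4 * M * W * R ^ (2 - 2 * s) * q * q ^ n := fun n => by
    set ρ : ℝ := R * 2 ^ (-((n : ℤ) + 1))
    have h2ρ : 2 * ρ ≤ R := two_mul_mul_two_zpow_neg_succ_le hR.le n
    refine (hF _ (by positivity : 0 ≤ M * (2 * ρ) ^ 2) fun y hy => ?_).trans_eq ?_
    · have hy' := mem_dyadicAnnulus.1 hy
      exact (hφR y (hy'.2.le.trans h2ρ)).trans (by gcongr; exact hy'.2.le)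
    · have hρs : ρ ^ 2 * ρ ^ (-(2 * s)) = R ^ (2 - 2 * s) * q ^ (n + 1) := by
        rw [← Real.rpow_two, ← Real.rpow_add (by positivity), ← sub_eq_add_neg,
          mul_two_zpow_neg_succ_rpow hR.le]
      linear_combination 4 * M * W * hρs
  rw [← hsum.tsum_eq]
  exact tsum_int_le_of_le_geometric hsum.summable (by positivity)
    (Real.rpow_lt_one_of_one_lt_of_neg one_lt_two (by linarith)) (by positivity)
    (Real.rpow_lt_one_of_one_lt_of_neg one_lt_two (by linarith)) hnat hneg

variable (μ) in
theorem exists_abs_integral_mul_le_of_dyadicAnnulus (hR : 0 < R) (hs : 0 < s) (hs1 : s < 1) :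
    ∃ C > 0, ∀ (φ g : E → ℝ) (M W : ℝ), φ 0 = 0 → (∀ y, |φ y| ≤ M) →
      (∀ y, ‖y‖ ≤ R → |φ y| ≤ M * ‖y‖ ^ 2) →
      (∀ ρ > 0, IntegrableOn g (dyadicAnnulus ρ) μ) →
      (∀ ρ > 0, ∫ y in dyadicAnnulus ρ, |g y| ∂μ ≤ W * ρ ^ (-(2 * s))) →
      |∫ y, φ y * g y ∂μ| ≤ C * M * W := by
  have hp : 0 < 1 - (2 : ℝ) ^ (-(2 * s)) :=
    sub_pos.2 (Real.rpow_lt_one_of_one_lt_of_neg one_lt_two (by linarith))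
  have hq : 0 < 1 - (2 : ℝ) ^ (-(2 - 2 * s)) :=
    sub_pos.2 (Real.rpow_lt_one_of_one_lt_of_neg one_lt_two (by linarith))
  refine ⟨R ^ (-(2 * s)) / (1 - 2 ^ (-(2 * s)))
    + 4 * R ^ (2 - 2 * s) * 2 ^ (-(2 - 2 * s)) / (1 - 2 ^ (-(2 - 2 * s))), by positivity, ?_⟩
  intro φ g M W hφ0 hφ hφR hg hgW
  have hM : 0 ≤ M := (abs_nonneg _).trans (hφ 0)
  have hW : 0 ≤ W := by
    simpa using (integral_nonneg fun y => abs_nonneg (g y)).trans (hgW 1 one_pos)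
  by_cases hφg : Integrable (fun y => φ y * g y) μ
  · calc |∫ y, φ y * g y ∂μ| ≤ ∫ y, |φ y * g y| ∂μ := abs_integral_le_integral_abs
      _ ≤ _ := integral_abs_mul_le_of_dyadicAnnulus hR hs hs1 hφg hφ0 hM hφ hφR hg hgW
      _ = _ := by ring
  · rw [integral_undef hφg, abs_zero]
    positivity

end DyadicEstimate

theorem stmt10_general (n : ℕ) (s : ℝ) (hs : 0 < s) (hs1 : s < 1)
    (r : ℝ) (hr : 0 < r) :
    ∃ C > 0, ∀ (Lam : ℝ) (K : Euc n → Euc n → ℝ), Measurable (Function.uncurry K) →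
      (∀ x : Euc n, ∀ y : Euc n, y ≠ 0 → |K x y| ≤ Lam * ‖y‖ ^ (-((n : ℝ) + 2 * s))) →
      ∀ ω : ℝ → ℝ, (∀ t, 0 ≤ t → 0 ≤ ω t) → Monotone ω →
      (∀ x x' : Euc n, ∀ ρ : ℝ, 0 < ρ →
        (∫ y in Metric.ball (0 : Euc n) (2 * ρ) \ Metric.ball 0 ρ, |K x y - K x' y|)
          ≤ ω ‖x - x'‖ * ρ ^ (-(2 * s))) →
      ∀ (u : Euc n → ℝ) (x₀ : Euc n) (A : ℝ), Continuous u → (∀ z, |u z| ≤ A) →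
      ContDiffOn ℝ 2 u (Metric.ball x₀ r) →
      (∀ k ≤ 2, ∀ z ∈ Metric.ball x₀ (3 * r / 4),
        ‖iteratedFDerivWithin ℝ k u (Metric.ball x₀ r) z‖ ≤ A) →
      ∀ x ∈ Metric.ball x₀ (r / 2), ∀ x' : Euc n,
        |∫ y, (2 * u x - u (x + y) - u (x - y)) * (K x' y - K x y)|
          ≤ C * A * ω ‖x - x'‖ := by
  obtain ⟨C, hC, hdyadic⟩ := exists_abs_integral_mul_le_of_dyadicAnnulus
    (volume : Measure (Euc n)) (by positivity : 0 < r / 4) hs hs1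
  refine ⟨4 * C, by positivity, fun Lam K hK hKle ω _ _ hKω u x₀ A _ hu_le hu hA x hx x' => ?_⟩
  have hA0 : 0 ≤ A := (abs_nonneg _).trans (hu_le x₀)
  have hKint : ∀ z, ∀ ρ > 0, IntegrableOn (K z) (dyadicAnnulus ρ) :=
    fun z ρ hρ => integrableOn_dyadicAnnulus
      (hK.comp measurable_prodMk_left).aestronglyMeasurable (by positivity) hρ (hKle z)
  have hbound : ∀ y, |2 * u x - u (x + y) - u (x - y)| ≤ 4 * A := fun y => by
    obtain ⟨hux, hux'⟩ := abs_le.1 (hu_le x)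
    obtain ⟨hup, hup'⟩ := abs_le.1 (hu_le (x + y))
    obtain ⟨hum, hum'⟩ := abs_le.1 (hu_le (x - y))
    exact abs_le.2 ⟨by linarith, by linarith⟩
  have hsecond : ∀ y : Euc n, ‖y‖ ≤ r / 4 →
      |2 * u x - u (x + y) - u (x - y)| ≤ 4 * A * ‖y‖ ^ 2 := fun y hy =>
    (abs_two_mul_sub_sub_le_of_mem_ball hu (hA 2 le_rfl) hx hy).trans (by gcongr; norm_num)
  have := hdyadic (fun y => 2 * u x - u (x + y) - u (x - y)) (fun y => K x' y - K x y) (4 * A)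
    (ω ‖x - x'‖) (by simp only [add_zero, sub_zero]; ring) hbound hsecond
    (fun ρ hρ => (hKint x' ρ hρ).sub (hKint x ρ hρ))
    (fun ρ hρ => by rw [norm_sub_rev]; exact hKω x' x ρ hρ)
  exact this.trans_eq (by ring)

/-- For a kernel `K(x,y)` bounded by `Λ|y|^{-n-2s}` satisfying the integral
continuity condition with modulus `ω`, if `u` is bounded and `C²` on `B_r(x₀)`
(with all norms bounded by `A`) and `x ∈ B_{r/2}(x₀)`, then
`|∫ (2u(x)-u(x+y)-u(x-y))(K(x',y)-K(x,y)) dy| ≤ C A ω(|x-x'|)`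
with `C = C(n,s,r)`. -/
theorem stmt10 (n : ℕ) (hn : 0 < n) (s : ℝ) (hs : 0 < s) (hs1 : s < 1)
    (r : ℝ) (hr : 0 < r) :
    ∃ C > 0, ∀ (Lam : ℝ) (K : Euc n → Euc n → ℝ), Measurable (Function.uncurry K) →
      (∀ x : Euc n, ∀ y : Euc n, y ≠ 0 → |K x y| ≤ Lam * ‖y‖ ^ (-((n : ℝ) + 2 * s))) →
      ∀ ω : ℝ → ℝ, (∀ t, 0 ≤ t → 0 ≤ ω t) → Monotone ω →
      (∀ x x' : Euc n, ∀ ρ : ℝ, 0 < ρ →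
        (∫ y in Metric.ball (0 : Euc n) (2 * ρ) \ Metric.ball 0 ρ, |K x y - K x' y|)
          ≤ ω ‖x - x'‖ * ρ ^ (-(2 * s))) →
      ∀ (u : Euc n → ℝ) (x₀ : Euc n) (A : ℝ), Continuous u → (∀ z, |u z| ≤ A) →
      ContDiffOn ℝ 2 u (Metric.ball x₀ r) →
      (∀ k ≤ 2, ∀ z ∈ Metric.ball x₀ (3 * r / 4),
        ‖iteratedFDerivWithin ℝ k u (Metric.ball x₀ r) z‖ ≤ A) →
      ∀ x ∈ Metric.ball x₀ (r / 2), ∀ x' : Euc n,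
        |∫ y, (2 * u x - u (x + y) - u (x - y)) * (K x' y - K x y)|
          ≤ C * A * ω ‖x - x'‖ :=
  stmt10_general n s hs hs1 r hr
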